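/- Let f_i(x) = x/8 + (7/8)i and g_i(x) = x/4 + (3/4)i for i ∈ {0,1}, and let F¹ = {f₀, f₁}, F² = {g₀, g₁} with the trivial equivalence relation on translation vectors. Then there exists a sequence of integers 1 = N₀ < N₁ < N₂ < ⋯ such that the code tree ω defined by ω(∅) = 2 and, for every word i_k of length k, ω(i_k) = 1 if N_{2l} ≤ k < N_{2l+1} and ω(i_k) = 2 if N_{2l+1} ≤ k < N_{2l+2} (l = 0,1,2,…), satisfies p_inf^ω(α) = (1 − 3α) log 2 and p_sup^ω(α) = (1 − 2α) log 2 for all α ≥ 0. In particular, the natural pressure p^ω(α) does not exist for any α > 0. -/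

import Mathlib

/-!
All nodes of level `j` carry the same ratio, `1/8` on `F¹`-levels and `1/4` otherwise, so
`S^ω(k, α) = 2^k · 2^{-α(2k + m_k)}` with `m_k` the number of `F¹`-levels below `k`, and
`(1/k) log S^ω(k, α) = (1 - 2α) log 2 - α log 2 · m_k / k`. With the necks `N_n = 2^{n²}` each
block is `2^{2n+1}` times longer than everything before it, so the density `m_k / k` tends to `1`
along `N_{2l+1}` and to `0` along `N_{2l+2}`; being in `[0, 1]`, it has limsup `1` and liminf `0`,
and the decreasing affine map above turns these into `p_inf^ω` and `p_sup^ω`.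
-/

open MeasureTheory Filter Set Topology
open scoped ENNReal Topology

noncomputable section

namespace CodeTreeFractal

variable {Λ : Type*}

/-- The word formed by the first `k` letters of an infinite path `i`. -/
def word (i : ℕ → ℕ) (k : ℕ) : List ℕ := (List.range k).map i

/-- `w` belongs to the tree `Σ_*^ω` determined by the branching numbers `Mlam`
and the code tree `ω`. (Letters are indexed from `0`.) -/
def IsNode (Mlam : Λ → ℕ) (ω : List ℕ → Λ) (w : List ℕ) : Prop :=
  ∀ j : Fin w.length, w.get j < Mlam (ω (w.take j))

/-- `i` is an infinite path of `Σ^ω`. -/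
def IsPath (Mlam : Λ → ℕ) (ω : List ℕ → Λ) (i : ℕ → ℕ) : Prop :=
  ∀ k, i k < Mlam (ω (word i k))

/-- The cylinder of infinite sequences beginning with the word `w`. -/
def cylinder (w : List ℕ) : Set (ℕ → ℕ) := {i | word i w.length = w}

/-- The set `Σ^ω` of infinite paths. -/
def pathSet (Mlam : Λ → ℕ) (ω : List ℕ → Λ) : Set (ℕ → ℕ) := {i | IsPath Mlam ω i}

/-- The product of the linear parts (contraction coefficients on `ℝ`) along a word. -/
def prodc (r : Λ → ℕ → ℝ) : (List ℕ → Λ) → List ℕ → ℝ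
  | _, [] => 1
  | ω, l :: w => r (ω []) l * prodc r (fun u => ω (l :: u)) w

/-- The singular value function on `ℝ` : `Φ^α(T) = |T|^α`. -/
def Phi1 (c : ℝ) (α : ℝ) : ℝ := |c| ^ α

/-- The sum `S^ω(k, α)` over the level-`k` nodes. -/
def S1 (Mlam : Λ → ℕ) (r : Λ → ℕ → ℝ) (ω : List ℕ → Λ) (k : ℕ) (α : ℝ) : ℝ :=
  ∑' w : {w : List ℕ // w.length = k ∧ IsNode Mlam ω w}, Phi1 (prodc r ω w.1) α

/-- The lower pressure `p_inf^ω(α)`. -/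
def pinf1 (Mlam : Λ → ℕ) (r : Λ → ℕ → ℝ) (ω : List ℕ → Λ) (α : ℝ) : ℝ :=
  liminf (fun k : ℕ => Real.log (S1 Mlam r ω k α) / k) atTop

/-- The upper pressure `p_sup^ω(α)`. -/
def psup1 (Mlam : Λ → ℕ) (r : Λ → ℕ → ℝ) (ω : List ℕ → Λ) (α : ℝ) : ℝ :=
  limsup (fun k : ℕ => Real.log (S1 Mlam r ω k α) / k) atTop

/-- The natural projection `Z_a^ω` on `ℝ`. -/
def Z1 (r : Λ → ℕ → ℝ) (tr : Λ → ℕ → ℝ) (ω : List ℕ → Λ) (i : ℕ → ℕ) : ℝ :=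
  ∑' k : ℕ, prodc r ω (word i k) * tr (ω (word i k)) (i k)

/-- The code tree fractal `A_a^ω ⊆ ℝ`. -/
def attractor1 (Mlam : Λ → ℕ) (r : Λ → ℕ → ℝ) (tr : Λ → ℕ → ℝ)
    (ω : List ℕ → Λ) : Set ℝ :=
  {x | ∃ i : ℕ → ℕ, IsPath Mlam ω i ∧ Z1 r tr ω i = x}

/-- The stage-`j` covering sums defining the natural measure `M_j^α(Σ^ω)`. -/
def natStage1 (Mlam : Λ → ℕ) (r : Λ → ℕ → ℝ) (ω : List ℕ → Λ)
    (α : ℝ) (j : ℕ) : ℝ≥0∞ :=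
  ⨅ (J : Set (List ℕ)) (_ : ∀ w ∈ J, IsNode Mlam ω w ∧ j ≤ w.length)
    (_ : pathSet Mlam ω ⊆ ⋃ w ∈ J, cylinder w),
    ∑' w : J, ENNReal.ofReal (Phi1 (prodc r ω w.1) α)

/-- The natural measure `M^α(Σ^ω)`. -/
def natMeasure1 (Mlam : Λ → ℕ) (r : Λ → ℕ → ℝ) (ω : List ℕ → Λ) (α : ℝ) : ℝ≥0∞ :=
  ⨆ j : ℕ, natStage1 Mlam r ω α j

/-- The affinity dimension `d^ω = inf {α ≥ 0 : M^α(Σ^ω) = 0}`. -/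
def affinityDim1 (Mlam : Λ → ℕ) (r : Λ → ℕ → ℝ) (ω : List ℕ → Λ) : ℝ :=
  sInf {α : ℝ | 0 ≤ α ∧ natMeasure1 Mlam r ω α = 0}

theorem prodc_eq_prod_range {r : Λ → ℕ → ℝ} {c : ℕ → ℝ} :
    ∀ {ω : List ℕ → Λ}, (∀ u l, r (ω u) l = c u.length) →
      ∀ w : List ℕ, prodc r ω w = ∏ j ∈ Finset.range w.length, c j
  | _, _, [] => by simp [prodc]
  | ω, h, l :: w => by
    rw [prodc, prodc_eq_prod_range (ω := fun u => ω (l :: u)) (c := fun j => c (j + 1))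
      (fun u l' => h (l :: u) l') w, h [] l, List.length_cons, Finset.prod_range_succ', mul_comm]
    rfl

def levelEquivOfConstBranching (M : ℕ) (ω : List ℕ → Λ) (k : ℕ) :
    {w : List ℕ // w.length = k ∧ IsNode (fun _ => M) ω w} ≃ (Fin k → Fin M) where
  toFun w j := ⟨w.1.get (Fin.cast w.2.1.symm j), w.2.2 _⟩
  invFun f := ⟨List.ofFn (fun j => (f j : ℕ)), by simp, fun _ => by simp⟩
  left_inv := by
    rintro ⟨w, rfl, -⟩
    exact Subtype.ext (List.ext_get (by simp) fun _ _ _ => by simp)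
  right_inv f := by
    funext j
    exact Fin.ext (by simp)

theorem S1_const_branching {M : ℕ} {r : Λ → ℕ → ℝ} {ω : List ℕ → Λ} {k : ℕ} {P : ℝ}
    (α : ℝ) (hP : ∀ w : List ℕ, w.length = k → prodc r ω w = P) :
    S1 (fun _ => M) r ω k α = M ^ k * |P| ^ α := by
  rw [S1, tsum_congr (fun w => by rw [Phi1, hP w.1 w.2.1]),
    ← (levelEquivOfConstBranching M ω k).symm.tsum_eq (fun _ => |P| ^ α)]
  simp

theorem limsup_eq_of_le_of_tendsto_comp {u : ℕ → ℝ} {a b : ℝ} {φ : ℕ → ℕ}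
    (hau : ∀ k, a ≤ u k) (hub : ∀ k, u k ≤ b) (hφ : Tendsto φ atTop atTop)
    (hlim : Tendsto (u ∘ φ) atTop (𝓝 b)) : limsup u atTop = b := by
  refine le_antisymm (limsup_le_of_le (isCoboundedUnder_le_of_le atTop hau) (.of_forall hub)) ?_
  calc b = limsup u (map φ atTop) := by rw [← limsup_comp, hlim.limsup_eq]
    _ ≤ limsup u atTop := limsup_le_limsup_of_le hφ
      (isCoboundedUnder_le_of_le _ hau) (isBoundedUnder_of_eventually_le (.of_forall hub))

theorem liminf_eq_of_le_of_tendsto_comp {u : ℕ → ℝ} {a b : ℝ} {φ : ℕ → ℕ}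
    (hau : ∀ k, a ≤ u k) (hub : ∀ k, u k ≤ b) (hφ : Tendsto φ atTop atTop)
    (hlim : Tendsto (u ∘ φ) atTop (𝓝 a)) : liminf u atTop = a := by
  refine le_antisymm ?_ (le_liminf_of_le (isCoboundedUnder_ge_of_le atTop hub) (.of_forall hau))
  calc liminf u atTop
      ≤ liminf u (map φ atTop) := liminf_le_liminf_of_le hφ
        (isBoundedUnder_of_eventually_ge (.of_forall hau)) (isCoboundedUnder_ge_of_le _ hub)
    _ = a := by rw [← liminf_comp, hlim.liminf_eq]

def neck (n : ℕ) : ℕ := 2 ^ n ^ 2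

theorem neck_strictMono : StrictMono neck :=
  fun _ _ h => Nat.pow_lt_pow_right one_lt_two (Nat.pow_lt_pow_left h two_ne_zero)

theorem neck_div_neck_succ (n : ℕ) : (neck n : ℝ) / neck (n + 1) = (1 / 2) ^ (2 * n + 1) := by
  rw [neck, neck, show (n + 1) ^ 2 = n ^ 2 + (2 * n + 1) by ring]
  push_cast
  rw [pow_add, div_mul_eq_div_div, div_self (by positivity), one_div_pow]

theorem tendsto_neck_div_neck_succ :
    Tendsto (fun n => (neck n : ℝ) / neck (n + 1)) atTop (𝓝 0) := by
  simp_rw [neck_div_neck_succ]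
  exact (tendsto_pow_atTop_nhds_zero_of_lt_one (by norm_num) (by norm_num)).comp
    (StrictMono.tendsto_atTop fun _ _ h => by omega)

/-- The levels on which the code tree uses `F¹`. -/
def IsEighthLevel (k : ℕ) : Prop := ∃ l, neck (2 * l) ≤ k ∧ k < neck (2 * l + 1)

open Classical in
def eighthCount (k : ℕ) : ℕ := Nat.count IsEighthLevel k

theorem neck_sub_le_eighthCount (l : ℕ) :
    neck (2 * l + 1) - neck (2 * l) ≤ eighthCount (neck (2 * l + 1)) := by
  classical
  have hle : neck (2 * l) ≤ neck (2 * l + 1) := neck_strictMono.monotone (by omega)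
  obtain ⟨d, hd⟩ := Nat.exists_eq_add_of_le hle
  rw [eighthCount, hd, Nat.count_add, Nat.add_sub_cancel_left]
  exact le_add_left (Nat.count_iff_forall.2 fun j hj => ⟨l, by omega, by omega⟩).ge

theorem eighthCount_le_neck (l : ℕ) : eighthCount (neck (2 * l + 2)) ≤ neck (2 * l + 1) := by
  classical
  have hle : neck (2 * l + 1) ≤ neck (2 * l + 2) := neck_strictMono.monotone (by omega)
  obtain ⟨d, hd⟩ := Nat.exists_eq_add_of_le hle
  have hgap : ∀ j < d, ¬IsEighthLevel (neck (2 * l + 1) + j) := by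
    rintro j hj ⟨l', hl'₁, hl'₂⟩
    rcases le_or_gt l' l with hl | hl
    · have := neck_strictMono.monotone (show 2 * l' + 1 ≤ 2 * l + 1 by omega)
      omega
    · have := neck_strictMono.monotone (show 2 * l + 2 ≤ 2 * l' by omega)
      omega
  rw [eighthCount, hd, Nat.count_add, Nat.count_iff_forall_not.2 hgap, add_zero]
  exact Nat.count_le _

theorem eighthCount_le (k : ℕ) : eighthCount k ≤ k := by
  classical
  exact Nat.count_le _

def eighthDensity (k : ℕ) : ℝ := eighthCount k / k

theorem eighthDensity_nonneg (k : ℕ) : 0 ≤ eighthDensity k :=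
  div_nonneg (eighthCount k).cast_nonneg k.cast_nonneg

theorem eighthDensity_le_one (k : ℕ) : eighthDensity k ≤ 1 :=
  div_le_one_of_le₀ (by exact_mod_cast eighthCount_le k) k.cast_nonneg

theorem tendsto_eighthDensity_neck_odd :
    Tendsto (fun l => eighthDensity (neck (2 * l + 1))) atTop (𝓝 1) := by
  have hratio : Tendsto (fun l => (neck (2 * l) : ℝ) / neck (2 * l + 1)) atTop (𝓝 0) :=
    tendsto_neck_div_neck_succ.comp (StrictMono.tendsto_atTop fun _ _ h => by omega)
  refine tendsto_of_tendsto_of_tendsto_of_le_of_le (by simpa using hratio.const_sub 1)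
    tendsto_const_nhds (fun l => ?_) (fun l => eighthDensity_le_one _)
  have hpos : (0 : ℝ) < neck (2 * l + 1) := by unfold neck; positivity
  have hle : neck (2 * l) ≤ neck (2 * l + 1) := neck_strictMono.monotone (by omega)
  have hcount : (neck (2 * l + 1) : ℝ) - neck (2 * l) ≤ eighthCount (neck (2 * l + 1)) := by
    rw [← Nat.cast_sub hle]
    exact_mod_cast neck_sub_le_eighthCount l
  rw [eighthDensity, one_sub_div hpos.ne']
  exact div_le_div_of_nonneg_right hcount hpos.le

theorem tendsto_eighthDensity_neck_even :
    Tendsto (fun l => eighthDensity (neck (2 * l + 2))) atTop (𝓝 0) := by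
  have hratio : Tendsto (fun l => (neck (2 * l + 1) : ℝ) / neck (2 * l + 2)) atTop (𝓝 0) :=
    tendsto_neck_div_neck_succ.comp (StrictMono.tendsto_atTop fun _ _ h => by omega)
  refine tendsto_of_tendsto_of_tendsto_of_le_of_le tendsto_const_nhds hratio
    (fun l => eighthDensity_nonneg _) (fun l => ?_)
  rw [eighthDensity]
  gcongr
  exact_mod_cast eighthCount_le_neck l

theorem limsup_eighthDensity : limsup eighthDensity atTop = 1 :=
  limsup_eq_of_le_of_tendsto_comp eighthDensity_nonneg eighthDensity_le_one
    (StrictMono.tendsto_atTop fun _ _ h => neck_strictMono (by omega)) tendsto_eighthDensity_neck_odd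

theorem liminf_eighthDensity : liminf eighthDensity atTop = 0 :=
  liminf_eq_of_le_of_tendsto_comp eighthDensity_nonneg eighthDensity_le_one
    (StrictMono.tendsto_atTop fun _ _ h => neck_strictMono (by omega)) tendsto_eighthDensity_neck_even

/-- Contraction ratios of `F¹` (label `0`) and `F²` (label `1`). -/
def contractionRatio : Fin 2 → ℕ → ℝ := fun l _ => if l = 0 then 1 / 8 else 1 / 4

open Classical in
def levelRatio (k : ℕ) : ℝ := if IsEighthLevel k then 1 / 8 else 1 / 4

theorem prod_levelRatio (k : ℕ) :
    ∏ j ∈ Finset.range k, levelRatio j = (1 / 2) ^ (2 * k + eighthCount k) := by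
  classical
  induction k with
  | zero => simp [eighthCount]
  | succ k ih =>
    rw [Finset.prod_range_succ, ih, eighthCount, eighthCount, Nat.count_succ, levelRatio]
    split_ifs <;> ring

theorem contractionRatio_eq_levelRatio {ω : List ℕ → Fin 2}
    (hω : ∀ w : List ℕ, ω w = 0 ↔ IsEighthLevel w.length) (u : List ℕ) (l : ℕ) :
    contractionRatio (ω u) l = levelRatio u.length := by
  by_cases h : IsEighthLevel u.length
  · simp [contractionRatio, levelRatio, (hω u).2 h, h]
  · have h1 : ω u = 1 := by
      have := (ω u).isLt
      have := mt (hω u).1 h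
      omega
    simp [contractionRatio, levelRatio, h1, h]

theorem log_S1_div_eq {ω : List ℕ → Fin 2} (hω : ∀ w : List ℕ, ω w = 0 ↔ IsEighthLevel w.length)
    (α : ℝ) {k : ℕ} (hk : k ≠ 0) :
    Real.log (S1 (fun _ => 2) contractionRatio ω k α) / k
      = (1 - 2 * α) * Real.log 2 - α * Real.log 2 * eighthDensity k := by
  have hprodc (w : List ℕ) (hw : w.length = k) :
      prodc contractionRatio ω w = (1 / 2) ^ (2 * k + eighthCount k) := by
    rw [prodc_eq_prod_range (contractionRatio_eq_levelRatio hω) w, hw, prod_levelRatio]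
  rw [S1_const_branching α hprodc, abs_of_pos (by positivity), Real.log_mul (by positivity)
    (by positivity), Real.log_rpow (by positivity), Real.log_pow, Real.log_pow, one_div,
    Real.log_inv, eighthDensity]
  field_simp
  push_cast
  ring

/-- Example `pressure1`: with `F¹ = {x/8, x/8 + 7/8}` (label `0`) and
`F² = {x/4, x/4 + 3/4}` (label `1`), there is a sequence of necks `1 = N₀ < N₁ < ⋯`
such that for the code tree using `F¹` on levels `[N_{2l}, N_{2l+1})` and `F²`
elsewhere (in particular `ω(∅) = F²`), one has `p_inf^ω(α) = (1-3α) log 2` and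
`p_sup^ω(α) = (1-2α) log 2` for all `α ≥ 0`; hence the pressure does not exist for
any `α > 0`. -/
theorem statement5 :
    ∃ N : ℕ → ℕ, N 0 = 1 ∧ StrictMono N ∧
      ∀ ω : List ℕ → Fin 2,
        (∀ w : List ℕ,
            ω w = 0 ↔ ∃ l : ℕ, N (2 * l) ≤ w.length ∧ w.length < N (2 * l + 1)) →
        ∀ α : ℝ, 0 ≤ α →
          pinf1 (fun _ : Fin 2 => 2)
              (fun l _ => if l = 0 then (1 : ℝ) / 8 else 1 / 4) ω α
            = (1 - 3 * α) * Real.log 2 ∧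
          psup1 (fun _ : Fin 2 => 2)
              (fun l _ => if l = 0 then (1 : ℝ) / 8 else 1 / 4) ω α
            = (1 - 2 * α) * Real.log 2 ∧
          (0 < α →
            pinf1 (fun _ : Fin 2 => 2)
                (fun l _ => if l = 0 then (1 : ℝ) / 8 else 1 / 4) ω α
              ≠ psup1 (fun _ : Fin 2 => 2)
                (fun l _ => if l = 0 then (1 : ℝ) / 8 else 1 / 4) ω α) := by
  refine ⟨neck, rfl, neck_strictMono, fun ω hω α hα => ?_⟩
  set f : ℝ → ℝ := fun x => (1 - 2 * α) * Real.log 2 - α * Real.log 2 * x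
  have hf : Antitone f := fun _ _ hxy =>
    sub_le_sub_left (mul_le_mul_of_nonneg_left hxy (by positivity)) _
  have hfc : Continuous f := by fun_prop
  have hbdd_le : IsBoundedUnder (· ≤ ·) atTop eighthDensity :=
    isBoundedUnder_of_eventually_le (.of_forall eighthDensity_le_one)
  have hbdd_ge : IsBoundedUnder (· ≥ ·) atTop eighthDensity :=
    isBoundedUnder_of_eventually_ge (.of_forall eighthDensity_nonneg)
  have hseq : (fun k : ℕ => Real.log (S1 (fun _ => 2) contractionRatio ω k α) / k)
      =ᶠ[atTop] f ∘ eighthDensity := by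
    filter_upwards [eventually_ne_atTop 0] with k hk using log_S1_div_eq hω α hk
  have hinf : pinf1 (fun _ => 2) contractionRatio ω α = (1 - 3 * α) * Real.log 2 := by
    rw [pinf1, liminf_congr hseq, ← hf.map_limsup_of_continuousAt _ hfc.continuousAt hbdd_le
      hbdd_ge.isCoboundedUnder_le, limsup_eighthDensity]
    ring
  have hsup : psup1 (fun _ => 2) contractionRatio ω α = (1 - 2 * α) * Real.log 2 := by
    rw [psup1, limsup_congr hseq, ← hf.map_liminf_of_continuousAt _ hfc.continuousAt
      hbdd_le.isCoboundedUnder_ge hbdd_ge, liminf_eighthDensity]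
    ring
  refine ⟨hinf, hsup, fun hα₀ h => ?_⟩
  have hL := Real.log_pos one_lt_two
  nlinarith [hinf.symm.trans (h.trans hsup)]

end CodeTreeFractal
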